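/- Let f and g be real polynomials, each with only real and distinct zeros, such that g strictly interlaces or strictly alternates left of f. Then g' strictly interlaces or strictly alternates left of f' (Markov's theorem on derivatives of interlacing polynomials). -/

import Mathlib

/-
Markov's argument through the Wronskian `W = f g' - f' g`. Interpolating `g` at the simple zeros
of `f` gives `W = -∑ₓ g(x) / f'(x) · (f / (X - x))²`, and interlacing makes every `g(x) f'(x)`
have the sign of `lc f · lc g`, so `W` has constant sign on `ℝ`. By Rolle the zeros `w₀ > w₁ > ⋯`
of `f'` separate those of `f`, and `W(wᵢ) = f(wᵢ) g'(wᵢ)` then gives `g'(wᵢ)` the sign of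
`(-1)ⁱ lc g`. The number of zeros of `g'` above `wᵢ` is therefore monotone in `i` with the parity
of `i`; as `g'` has at most as many zeros as there are `wᵢ`, it equals `i`, which is the
interlacing of `g'` with `f'`.
-/

open Polynomial

/-- `g` strictly interlaces or strictly alternates left of `f`: listing the zeros
of `f` in strictly decreasing order `u` and those of `g` in strictly decreasing
order `v`, either `deg f = deg g + 1` and `u_{i+1} < v_i < u_i` for all `i`, or
`deg f = deg g` and `v_i < u_i` for all `i` and `u_{i+1} < v_i` whenever `i + 1`
is a valid index. -/
def StrictlyPrec (g f : Polynomial ℝ) : Prop :=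
  ∃ u v : List ℝ, f.roots = (u : Multiset ℝ) ∧ g.roots = (v : Multiset ℝ) ∧
    u.Pairwise (· > ·) ∧ v.Pairwise (· > ·) ∧
    ((u.length = v.length + 1 ∧
        ∀ i, i < v.length → u.getD (i + 1) 0 < v.getD i 0 ∧ v.getD i 0 < u.getD i 0) ∨
      (u.length = v.length ∧
        ∀ i, i < v.length → v.getD i 0 < u.getD i 0 ∧
          (i + 1 < u.length → u.getD (i + 1) 0 < v.getD i 0)))

open Lagrange

theorem List.Pairwise.getD_lt_getD {l : List ℝ} (hl : l.Pairwise (· > ·)) {i j : ℕ}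
    (hij : i < j) (hj : j < l.length) : l.getD j 0 < l.getD i 0 := by
  rw [List.getD_eq_getElem _ _ hj, List.getD_eq_getElem _ _ (hij.trans hj)]
  exact List.pairwise_iff_getElem.mp hl i j _ hj hij

theorem List.Pairwise.getD_le_getD {l : List ℝ} (hl : l.Pairwise (· > ·)) {i j : ℕ}
    (hij : i ≤ j) (hj : j < l.length) : l.getD j 0 ≤ l.getD i 0 := by
  rcases hij.eq_or_lt with rfl | hij
  · exact le_rfl
  · exact (hl.getD_lt_getD hij hj).le

def IsGapIndex (l : List ℝ) (t : ℝ) (k : ℕ) : Prop :=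
  k ≤ l.length ∧ (∀ j < k, t < l.getD j 0) ∧
    ∀ j, k ≤ j → j < l.length → l.getD j 0 < t

theorem isGapIndex_nil_iff {t : ℝ} {k : ℕ} : IsGapIndex [] t k ↔ k = 0 := by
  simp only [IsGapIndex, List.length_nil, Nat.not_lt_zero]
  constructor
  · rintro ⟨hk, -, -⟩; omega
  · rintro rfl; exact ⟨le_rfl, by omega, by simp⟩

theorem isGapIndex_cons_zero_iff {a t : ℝ} {l : List ℝ} :
    IsGapIndex (a :: l) t 0 ↔ a < t ∧ IsGapIndex l t 0 := by
  simp only [IsGapIndex, Nat.not_lt_zero, List.length_cons]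
  constructor
  · rintro ⟨-, -, h⟩
    exact ⟨h 0 le_rfl (by omega), by omega, by simp,
      fun j _ hj => by simpa using h (j + 1) (by omega) (by omega)⟩
  · rintro ⟨ha, -, -, h⟩
    refine ⟨by omega, by simp, fun j _ hj => ?_⟩
    cases j with
    | zero => simpa using ha
    | succ j => simpa using h j (by omega) (by omega)

theorem isGapIndex_cons_succ_iff {a t : ℝ} {l : List ℝ} {k : ℕ} :
    IsGapIndex (a :: l) t (k + 1) ↔ t < a ∧ IsGapIndex l t k := by
  simp only [IsGapIndex, List.length_cons]
  constructor
  · rintro ⟨hk, hlt, hgt⟩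
    exact ⟨by simpa using hlt 0 (by omega), by omega,
      fun j hj => by simpa using hlt (j + 1) (by omega),
      fun j hj hjl => by simpa using hgt (j + 1) (by omega) (by omega)⟩
  · rintro ⟨ha, hk, hlt, hgt⟩
    refine ⟨by omega, fun j hj => ?_, fun j hj hjl => ?_⟩
    · cases j with
      | zero => simpa using ha
      | succ j => simpa using hlt j (by omega)
    · obtain ⟨j, rfl⟩ : ∃ i, j = i + 1 := ⟨j - 1, by omega⟩
      simpa using hgt j (by omega) (by omega)

theorem IsGapIndex.notMem {l : List ℝ} {t : ℝ} {k : ℕ} (h : IsGapIndex l t k) : t ∉ l := by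
  intro ht
  obtain ⟨j, hj, rfl⟩ := List.getElem_of_mem ht
  rw [← List.getD_eq_getElem _ 0 hj] at h
  rcases lt_or_ge j k with hjk | hjk
  · exact lt_irrefl _ (h.2.1 j hjk)
  · exact lt_irrefl _ (h.2.2 j hjk hj)

theorem IsGapIndex.card_filter {l : List ℝ} {t : ℝ} {k : ℕ} (h : IsGapIndex l t k) :
    ((l : Multiset ℝ).filter (t < ·)).card = k := by
  induction l generalizing k with
  | nil => simpa using (isGapIndex_nil_iff.mp h).symm
  | cons a l ih =>
    rw [← Multiset.cons_coe]
    cases k with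
    | zero =>
      obtain ⟨ha, h⟩ := isGapIndex_cons_zero_iff.mp h
      rw [Multiset.filter_cons_of_neg _ ha.not_gt, ih h]
    | succ k =>
      obtain ⟨ha, h⟩ := isGapIndex_cons_succ_iff.mp h
      rw [Multiset.filter_cons_of_pos _ ha, Multiset.card_cons, ih h]

theorem isGapIndex_card_filter {l : List ℝ} (hl : l.Pairwise (· > ·)) {t : ℝ} (ht : t ∉ l) :
    IsGapIndex l t ((l : Multiset ℝ).filter (t < ·)).card := by
  induction l with
  | nil => simp [isGapIndex_nil_iff]
  | cons a l ih =>
    obtain ⟨hal, hl⟩ := List.pairwise_cons.mp hl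
    have ih := ih hl fun h => ht (List.mem_cons_of_mem a h)
    have hta : t ≠ a := by rintro rfl; exact ht List.mem_cons_self
    rw [← Multiset.cons_coe]
    rcases hta.lt_or_gt with hta | hat
    · rw [Multiset.filter_cons_of_pos _ hta, Multiset.card_cons]
      exact isGapIndex_cons_succ_iff.mpr ⟨hta, ih⟩
    · have hfilter : (l : Multiset ℝ).filter (t < ·) = 0 :=
        Multiset.filter_eq_nil.mpr fun b hb => (lt_trans (hal b hb) hat).not_gt
      rw [hfilter] at ih
      rw [Multiset.filter_cons_of_neg _ hat.not_gt, hfilter]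
      exact isGapIndex_cons_zero_iff.mpr ⟨hat, ih⟩

structure Interlacing (v u : List ℝ) : Prop where
  length_le : v.length ≤ u.length
  length_le_succ : u.length ≤ v.length + 1
  getD_lt_getD : ∀ i < v.length, v.getD i 0 < u.getD i 0
  getD_succ_lt_getD : ∀ i < v.length, i + 1 < u.length → u.getD (i + 1) 0 < v.getD i 0

theorem strictlyPrec_iff {f g : ℝ[X]} :
    StrictlyPrec g f ↔ ∃ u v : List ℝ, f.roots = u ∧ g.roots = v ∧
      u.Pairwise (· > ·) ∧ v.Pairwise (· > ·) ∧ Interlacing v u := by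
  refine exists₂_congr fun u v => and_congr_right' <| and_congr_right' <| and_congr_right' <|
    and_congr_right' ⟨?_, ?_⟩
  · rintro (⟨hlen, h⟩ | ⟨hlen, h⟩)
    · exact ⟨by omega, by omega, fun i hi => (h i hi).2, fun i hi _ => (h i hi).1⟩
    · exact ⟨by omega, by omega, fun i hi => (h i hi).1, fun i hi => (h i hi).2⟩
  · rintro ⟨hle, hle', hlt, hlt'⟩
    rcases hle.eq_or_lt with hlen | hlen
    · exact Or.inr ⟨hlen.symm, fun i hi => ⟨hlt i hi, hlt' i hi⟩⟩
    · exact Or.inl ⟨by omega, fun i hi => ⟨hlt' i hi (by omega), hlt i hi⟩⟩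

namespace Interlacing

variable {u v : List ℝ}

theorem isGapIndex_left (h : Interlacing v u) (hu : u.Pairwise (· > ·))
    (hv : v.Pairwise (· > ·)) {i : ℕ} (hi : i < u.length) : IsGapIndex v (u.getD i 0) i := by
  have := h.length_le_succ
  refine ⟨by omega, fun j hj => ?_, fun j hj hjv => ?_⟩
  · calc u.getD i 0 ≤ u.getD (j + 1) 0 := hu.getD_le_getD hj hi
      _ < v.getD j 0 := h.getD_succ_lt_getD j (by omega) (by omega)
  · calc v.getD j 0 ≤ v.getD i 0 := hv.getD_le_getD hj hjv
      _ < u.getD i 0 := h.getD_lt_getD i (by omega)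

theorem isGapIndex_right (h : Interlacing v u) (hu : u.Pairwise (· > ·))
    {i : ℕ} (hi : i < v.length) : IsGapIndex u (v.getD i 0) (i + 1) := by
  have := h.length_le
  refine ⟨by omega, fun j hj => ?_, fun j hj hju => ?_⟩
  · calc v.getD i 0 < u.getD i 0 := h.getD_lt_getD i hi
      _ ≤ u.getD j 0 := hu.getD_le_getD (by omega) (by omega)
  · calc u.getD j 0 ≤ u.getD (i + 1) 0 := hu.getD_le_getD hj hju
      _ < v.getD i 0 := h.getD_succ_lt_getD i hi (by omega)

end Interlacing

theorem interlacing_of_isGapIndex {u v : List ℝ} (hlen : v.length ≤ u.length)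
    (hlen' : u.length ≤ v.length + 1) (h : ∀ i < u.length, IsGapIndex v (u.getD i 0) i) :
    Interlacing v u :=
  ⟨hlen, hlen', fun i hi => (h i (by omega)).2.2 i le_rfl hi,
    fun i _ hi' => (h (i + 1) hi').2.1 i (by omega)⟩

theorem Multiset.neg_one_pow_card_filter_mul_prod_map_sub_pos (s : Multiset ℝ) {t : ℝ}
    (ht : t ∉ s) : 0 < (-1) ^ (s.filter (t < ·)).card * (s.map (t - ·)).prod := by
  induction s using Multiset.induction_on with
  | empty => simp
  | cons a s ih =>
    have ih := ih fun h => ht (Multiset.mem_cons_of_mem h)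
    have hta : t ≠ a := by rintro rfl; exact ht (Multiset.mem_cons_self t s)
    rcases hta.lt_or_gt with hta | hat
    · rw [Multiset.filter_cons_of_pos _ hta, Multiset.card_cons, pow_succ, Multiset.map_cons,
        Multiset.prod_cons]
      nlinarith
    · rw [Multiset.filter_cons_of_neg _ hat.not_gt, Multiset.map_cons, Multiset.prod_cons]
      nlinarith

theorem Polynomial.ne_zero_of_roots_eq_coe {R : Type*} [CommRing R] [IsDomain R] {p : R[X]}
    {l : List R} (hpl : p.roots = l) (hl : l ≠ []) : p ≠ 0 := by
  rintro rfl
  exact hl ((Multiset.coe_eq_zero l).mp (hpl.symm.trans roots_zero))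

theorem Polynomial.Splits.natDegree_eq_length {R : Type*} [CommRing R] [IsDomain R] {p : R[X]}
    (hp : Splits p) {l : List R} (hpl : p.roots = l) : p.natDegree = l.length := by
  rw [← splits_iff_card_roots.mp hp, hpl, Multiset.coe_card]

theorem Polynomial.Splits.neg_one_pow_mul_eval_pos {p : ℝ[X]} (hp : Splits p) {t : ℝ}
    (ht : p.eval t ≠ 0) :
    0 < (-1) ^ (p.roots.filter (t < ·)).card * p.leadingCoeff * p.eval t := by
  have hp0 : p ≠ 0 := by rintro rfl; exact ht eval_zero
  have hprod := p.roots.neg_one_pow_card_filter_mul_prod_map_sub_pos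
    fun h => ht ((mem_roots hp0).mp h)
  have hlc : p.leadingCoeff ≠ 0 := leadingCoeff_ne_zero.mpr hp0
  rw [hp.eval_eq_prod_roots]
  calc 0 < p.leadingCoeff * p.leadingCoeff *
        ((-1) ^ (p.roots.filter (t < ·)).card * (p.roots.map (t - ·)).prod) :=
        mul_pos (mul_self_pos.mpr hlc) hprod
    _ = _ := by ring

theorem Polynomial.Splits.neg_one_pow_mul_eval_pos_of_isGapIndex {p : ℝ[X]} (hp : Splits p)
    (hp0 : p ≠ 0) {l : List ℝ} (hpl : p.roots = l) {t : ℝ} {k : ℕ} (h : IsGapIndex l t k) :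
    0 < (-1) ^ k * p.leadingCoeff * p.eval t := by
  have ht : p.eval t ≠ 0 := fun h0 =>
    h.notMem (Multiset.mem_coe.mp (hpl ▸ (mem_roots hp0).mpr h0))
  have := hp.neg_one_pow_mul_eval_pos ht
  rwa [hpl, h.card_filter] at this

theorem Nat.mod_two_eq_of_neg_one_pow_mul_pos {a b : ℕ} {c : ℝ} (ha : 0 < (-1) ^ a * c)
    (hb : 0 < (-1) ^ b * c) : a % 2 = b % 2 := by
  rw [neg_one_pow_eq_pow_mod_two] at ha hb
  rcases Nat.mod_two_eq_zero_or_one a with h | h <;>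
    rcases Nat.mod_two_eq_zero_or_one b with h' | h' <;> simp only [h, h'] at ha hb ⊢ <;>
    linarith

theorem neg_one_pow_mul_mul_neg_one_pow_mul {R : Type*} [CommRing R] (n : ℕ) (a b : R) :
    (-1) ^ n * a * ((-1) ^ n * b) = a * b := by
  rw [mul_mul_mul_comm, ← mul_pow, neg_one_mul, neg_neg, one_pow, one_mul]

theorem Nat.eq_of_monotone_of_mod_two_eq {K : ℕ → ℕ} {N : ℕ}
    (hmono : ∀ i, i + 1 < N → K i ≤ K (i + 1)) (hpar : ∀ i < N, K i % 2 = i % 2)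
    (hlast : K (N - 1) ≤ N) {i : ℕ} (hi : i < N) : K i = i := by
  have hstep : ∀ j, j + 1 < N → K j + 1 ≤ K (j + 1) := fun j hj => by
    have := hmono j hj; have := hpar j (by omega); have := hpar (j + 1) hj; omega
  have hchain : ∀ a j, a ≤ j → j < N → K a + (j - a) ≤ K j := by
    intro a j haj hj
    induction j, haj using Nat.le_induction with
    | base => simp
    | succ j haj ih => have := ih (by omega); have := hstep j hj; omega
  have := hchain 0 i (Nat.zero_le i) hi
  have := hchain i (N - 1) (by omega) (by omega)
  have := hpar (N - 1) (by omega)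
  omega

theorem Polynomial.Splits.isGapIndex_of_alternating_sign {p : ℝ[X]} (hp : Splits p)
    {x w : List ℝ} (hpx : p.roots = x) (hx : x.Pairwise (· > ·)) (hw : w.Pairwise (· > ·))
    (hlen : x.length ≤ w.length)
    (hsign : ∀ i < w.length, 0 < (-1) ^ i * p.leadingCoeff * p.eval (w.getD i 0))
    {i : ℕ} (hi : i < w.length) : IsGapIndex x (w.getD i 0) i := by
  set K : ℕ → ℕ := fun i => ((x : Multiset ℝ).filter (w.getD i 0 < ·)).card
  have hne : ∀ i < w.length, p.eval (w.getD i 0) ≠ 0 := fun i hi h =>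
    (hsign i hi).ne' (by rw [h, mul_zero])
  have hpar : ∀ i < w.length, K i % 2 = i % 2 := fun i hi => by
    have hK := hp.neg_one_pow_mul_eval_pos (hne i hi)
    rw [hpx, mul_assoc] at hK
    exact Nat.mod_two_eq_of_neg_one_pow_mul_pos hK (by rw [← mul_assoc]; exact hsign i hi)
  have hmono : ∀ i, i + 1 < w.length → K i ≤ K (i + 1) := fun i hi =>
    Multiset.card_le_card <| Multiset.monotone_filter_right _ fun _ hb =>
      (hw.getD_lt_getD (lt_add_one i) hi).trans hb
  have hlast : K (w.length - 1) ≤ w.length :=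
    (Multiset.card_le_card (Multiset.filter_le _ _)).trans (by simpa using hlen)
  have hgap : IsGapIndex x (w.getD i 0) (K i) := isGapIndex_card_filter hx fun hmem =>
    hne i hi (mem_roots'.mp (hpx ▸ Multiset.mem_coe.mpr hmem)).2
  rwa [Nat.eq_of_monotone_of_mod_two_eq hmono hpar hlast hi] at hgap

theorem Polynomial.roots_eq_coe_of_nodup {R : Type*} [CommRing R] [IsDomain R] {q : R[X]}
    {l : List R} (hl : l.Nodup) (hsub : ∀ x ∈ l, x ∈ q.roots)
    (hlen : q.natDegree ≤ l.length) : q.roots = l :=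
  (Multiset.eq_of_le_of_card_le ((Multiset.le_iff_subset (Multiset.coe_nodup.mpr hl)).mpr hsub)
    ((card_roots' q).trans (by rwa [Multiset.coe_card]))).symm

theorem Polynomial.Splits.exists_roots_derivative {p : ℝ[X]} (hp : Splits p) {u : List ℝ}
    (hpu : p.roots = u) (hu : u.Pairwise (· > ·)) :
    ∃ w : List ℝ, (derivative p).roots = w ∧ w.Pairwise (· > ·) ∧
      w.length = u.length - 1 ∧ Interlacing w u ∧ Splits (derivative p) := by
  have hlen := hp.natDegree_eq_length hpu
  have hroot : ∀ i < u.length, p.IsRoot (u.getD i 0) := fun i hi => by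
    rw [← mem_roots (ne_zero_of_roots_eq_coe hpu (List.ne_nil_of_length_pos (by omega))), hpu,
      List.getD_eq_getElem _ _ hi]
    exact Multiset.mem_coe.mpr (List.getElem_mem hi)
  have hrolle : ∀ i : Fin (u.length - 1), ∃ c, u.getD (i + 1) 0 < c ∧ c < u.getD i 0 ∧
      (derivative p).IsRoot c := fun ⟨i, hi⟩ => by
    obtain ⟨c, ⟨hc, hc'⟩, hderiv⟩ := exists_deriv_eq_zero
      (hu.getD_lt_getD (lt_add_one i) (by omega)) p.continuousOn
      ((hroot (i + 1) (by omega)).trans (hroot i (by omega)).symm)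
    exact ⟨c, hc, hc', by rwa [p.deriv] at hderiv⟩
  choose c hcl hcr hcroot using hrolle
  have hw : (List.ofFn c).Pairwise (· > ·) := List.pairwise_ofFn.mpr fun i j hij =>
    calc c j < u.getD j 0 := hcr j
      _ ≤ u.getD (i + 1) 0 := hu.getD_le_getD hij (by omega)
      _ < c i := hcl i
  have hwc : ∀ i (hi : i < u.length - 1), (List.ofFn c).getD i 0 = c ⟨i, hi⟩ := fun i hi => by
    simp [hi]
  have hroots : (derivative p).roots = List.ofFn c := by
    refine roots_eq_coe_of_nodup (hw.imp ne_of_gt) (fun x hx => ?_)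
      (by rw [List.length_ofFn, natDegree_derivative, hlen])
    obtain ⟨i, rfl⟩ := List.mem_ofFn.mp hx
    exact (mem_roots (derivative_ne_zero.mpr (by have := i.isLt; omega))).mpr (hcroot i)
  have hsplit : Splits (derivative p) := by
    rw [splits_iff_card_roots, hroots, Multiset.coe_card, List.length_ofFn, natDegree_derivative,
      hlen]
  refine ⟨List.ofFn c, hroots, hw, List.length_ofFn, ⟨by simp, by simp; omega,
    fun i hi => ?_, fun i hi _ => ?_⟩, hsplit⟩ <;> rw [List.length_ofFn] at hi
  · exact hwc i hi ▸ hcr ⟨i, hi⟩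
  · exact hwc i hi ▸ hcl ⟨i, hi⟩

theorem Lagrange.wronskian_nodal_eq {F ι : Type*} [Field F] [DecidableEq ι] {s : Finset ι}
    {v : ι → F} (hvs : Set.InjOn v s) {g : F[X]} (hg : g.natDegree ≤ s.card) :
    wronskian (nodal s v) g =
      -∑ i ∈ s, C (nodalWeight s v i * g.eval (v i)) * nodal (s.erase i) v ^ 2 := by
  have hN : (nodal s v).Monic := nodal_monic
  have hq : derivative (g /ₘ nodal s v) = 0 := derivative_of_natDegree_zero <| by
    rw [natDegree_divByMonic _ hN, natDegree_nodal]; omega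
  -- the quotient `g /ₘ nodal s v` is constant, and `wronskian p (p * c) = 0` for constant `c`
  have hrem : wronskian (nodal s v) g = wronskian (nodal s v) (g %ₘ nodal s v) := by
    conv_lhs => rw [← modByMonic_add_div g (nodal s v)]
    rw [wronskian_add_right, add_eq_left, wronskian, derivative_mul, hq]
    ring
  have hinterp : g %ₘ nodal s v =
      ∑ i ∈ s, C (nodalWeight s v i * g.eval (v i)) * nodal (s.erase i) v := by
    have hdeg : (g %ₘ nodal s v).degree < s.card :=
      degree_nodal (v := v) ▸ degree_modByMonic_lt g hN
    rw [eq_interpolate hvs hdeg, interpolate_apply]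
    refine Finset.sum_congr rfl fun i hi => ?_
    rw [basis_eq_prod_sub_inv_mul_nodal_div hi, ← nodal_erase_eq_nodal_div hi,
      modByMonic_eq_sub_mul_div g (nodal s v), eval_sub, eval_mul, eval_nodal_at_node hi, zero_mul,
      sub_zero, C_mul]
    ring
  have hterm : ∀ i ∈ s,
      wronskian (nodal s v) (nodal (s.erase i) v) = -nodal (s.erase i) v ^ 2 := fun i hi => by
    rw [nodal_eq_mul_nodal_erase hi, wronskian, derivative_mul, derivative_sub, derivative_X,
      derivative_C]
    ring
  rw [hrem, hinterp, wronskian, derivative_sum, Finset.mul_sum, Finset.mul_sum,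
    ← Finset.sum_sub_distrib, ← Finset.sum_neg_distrib]
  refine Finset.sum_congr rfl fun i hi => ?_
  have := hterm i hi
  rw [wronskian] at this
  rw [derivative_C_mul]
  linear_combination C (nodalWeight s v i * eval (v i) g) * this

theorem Lagrange.eval_wronskian_nodal_neg {s : Finset ℝ} (hs : s.Nonempty) {g : ℝ[X]}
    (hg : g.natDegree ≤ s.card)
    (hpos : ∀ x ∈ s, 0 < g.eval x * (derivative (nodal s id)).eval x) (t : ℝ) :
    (wronskian (nodal s id) g).eval t < 0 := by
  rw [wronskian_nodal_eq (Set.injOn_id _) hg, eval_neg, neg_lt_zero, eval_finsetSum]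
  have hweight : ∀ x ∈ s, 0 < nodalWeight s id x * g.eval x := fun x hx => by
    have hx' := hpos x hx
    set d := (derivative (nodal s id)).eval x
    have hd : d ≠ 0 := by rintro h; simp [h] at hx'
    rw [nodalWeight_eq_eval_derivative_nodal hx, id]
    calc 0 < g.eval x * d * d⁻¹ ^ 2 := by positivity
      _ = d⁻¹ * g.eval x := by field_simp
  obtain ⟨x₀, hx₀, ht⟩ : ∃ x₀ ∈ s, (nodal (s.erase x₀) id).eval t ≠ 0 := by
    by_cases hts : t ∈ s
    · exact ⟨t, hts, eval_nodal_not_at_node fun i hi => (Finset.ne_of_mem_erase hi).symm⟩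
    · exact ⟨hs.choose, hs.choose_spec, eval_nodal_not_at_node fun i hi h =>
        hts (h ▸ Finset.mem_of_mem_erase hi)⟩
  refine Finset.sum_pos' (fun x hx => ?_) ⟨x₀, hx₀, ?_⟩
  · simp only [eval_mul, eval_C, eval_pow]
    exact mul_nonneg (hweight x hx).le (sq_nonneg _)
  · simp only [eval_mul, eval_C, eval_pow]
    exact mul_pos (hweight x₀ hx₀) (by positivity)

theorem Polynomial.Splits.eval_wronskian_neg {f g : ℝ[X]} (hf : Splits f) (hnd : f.roots.Nodup)
    (hf0 : f.roots ≠ 0) (hg : g.natDegree ≤ f.natDegree)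
    (hpos : ∀ x ∈ f.roots, 0 < g.eval x * (derivative f).eval x) (t : ℝ) :
    (wronskian f g).eval t < 0 := by
  classical
  set s := f.roots.toFinset
  set a := f.leadingCoeff
  have hfs : f = C a * nodal s id := by
    conv_lhs => rw [hf.eq_prod_roots]
    rw [nodal, Finset.prod_eq_multiset_prod, Multiset.toFinset_val, Multiset.dedup_eq_self.mpr hnd]
    rfl
  have hderiv : derivative f = C a * derivative (nodal s id) := by
    conv_lhs => rw [hfs, derivative_C_mul]
  have hW : wronskian f g = wronskian (nodal s id) (C a * g) := by
    rw [wronskian, wronskian, hderiv, derivative_C_mul]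
    conv_lhs => rw [hfs]
    ring
  have hcard : f.natDegree = s.card := by
    rw [← splits_iff_card_roots.mp hf, Multiset.toFinset_card_of_nodup hnd]
  rw [hW]
  refine eval_wronskian_nodal_neg (Multiset.toFinset_nonempty.mpr hf0)
    ((natDegree_C_mul_le _ _).trans (hcard ▸ hg)) (fun x hx => ?_) t
  have := hpos x (Multiset.mem_toFinset.mp hx)
  rw [hderiv, eval_mul, eval_C] at this
  rw [eval_mul, eval_C]
  linarith

theorem eval_wronskian_neg_of_interlacing {f g : ℝ[X]} (hf : Splits f) (hg : Splits g)
    (hf' : Splits (derivative f)) {u v w : List ℝ} (hfu : f.roots = u) (hgv : g.roots = v)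
    (hfw : (derivative f).roots = w) (hu : u.Pairwise (· > ·)) (hv : v.Pairwise (· > ·))
    (hw : w.Pairwise (· > ·)) (hvu : Interlacing v u) (hwu : Interlacing w u) (hv0 : v ≠ [])
    (hw0 : w ≠ []) (t : ℝ) :
    f.leadingCoeff * g.leadingCoeff * (wronskian f g).eval t < 0 := by
  have hu0 : 0 < u.length := (List.length_pos_iff.mpr hw0).trans_le hwu.length_le
  have hfdeg := hf.natDegree_eq_length hfu
  have hgu : ∀ j < u.length, 0 < (-1) ^ j * (g.leadingCoeff * g.eval (u.getD j 0)) :=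
    fun j hj => by
      rw [← mul_assoc]
      exact hg.neg_one_pow_mul_eval_pos_of_isGapIndex (ne_zero_of_roots_eq_coe hgv hv0) hgv
        (hvu.isGapIndex_left hu hv hj)
  have hf'u : ∀ j < u.length,
      0 < (-1) ^ j * ((derivative f).leadingCoeff * (derivative f).eval (u.getD j 0)) :=
    fun j hj => by
      rw [← mul_assoc]
      exact hf'.neg_one_pow_mul_eval_pos_of_isGapIndex (ne_zero_of_roots_eq_coe hfw hw0) hfw
        (hwu.isGapIndex_left hu hw hj)
  have hpos : ∀ x ∈ f.roots,
      0 < (C (f.leadingCoeff * g.leadingCoeff) * g).eval x * (derivative f).eval x := by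
    intro x hx
    rw [hfu] at hx
    obtain ⟨j, hj, rfl⟩ := List.getElem_of_mem (Multiset.mem_coe.mp hx)
    rw [← List.getD_eq_getElem _ 0 hj]
    have hprod := mul_pos (hgu j hj) (hf'u j hj)
    rw [neg_one_pow_mul_mul_neg_one_pow_mul, leadingCoeff_derivative] at hprod
    have hn : (0 : ℝ) < f.natDegree := by rw [hfdeg]; exact_mod_cast hu0
    refine pos_of_mul_pos_left (b := (f.natDegree : ℝ)) ?_ hn.le
    rw [eval_mul, eval_C]
    linarith
  have hW := hf.eval_wronskian_neg (hfu ▸ Multiset.coe_nodup.mpr (hu.imp ne_of_gt))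
    (hfu ▸ (Multiset.coe_eq_zero u).not.mpr (List.length_pos_iff.mp hu0))
    ((natDegree_C_mul_le _ _).trans (by
      rw [hfdeg, hg.natDegree_eq_length hgv]; exact hvu.length_le)) hpos t
  have hC : wronskian f (C (f.leadingCoeff * g.leadingCoeff) * g) =
      C (f.leadingCoeff * g.leadingCoeff) * wronskian f g := by
    rw [wronskian, wronskian, derivative_C_mul]
    ring
  rwa [hC, eval_mul, eval_C] at hW

theorem neg_one_pow_mul_eval_derivative_pos_of_interlacing {f g : ℝ[X]} (hf : Splits f)
    (hg : Splits g) (hf' : Splits (derivative f)) {u v w : List ℝ} (hfu : f.roots = u)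
    (hgv : g.roots = v) (hfw : (derivative f).roots = w) (hu : u.Pairwise (· > ·))
    (hv : v.Pairwise (· > ·)) (hw : w.Pairwise (· > ·)) (hvu : Interlacing v u)
    (hwu : Interlacing w u) (hwlen : w.length = u.length - 1) {i : ℕ} (hi : i < w.length) :
    0 < (-1) ^ i * (derivative g).leadingCoeff * (derivative g).eval (w.getD i 0) := by
  have := hvu.length_le_succ
  have hv0 : 0 < v.length := by omega
  have hW := eval_wronskian_neg_of_interlacing hf hg hf' hfu hgv hfw hu hv hw hvu hwu
    (List.length_pos_iff.mp hv0) (List.ne_nil_of_length_pos (by omega)) (w.getD i 0)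
  have hroot : (derivative f).eval (w.getD i 0) = 0 := by
    refine (mem_roots (ne_zero_of_roots_eq_coe hfw (List.ne_nil_of_length_pos (by omega)))).mp ?_
    rw [hfw, List.getD_eq_getElem _ _ hi]
    exact Multiset.mem_coe.mpr (List.getElem_mem hi)
  -- at a zero of `f'` the Wronskian reduces to `f * g'`
  rw [wronskian, eval_sub, eval_mul, eval_mul, hroot, zero_mul, sub_zero] at hW
  have hfwi := hf.neg_one_pow_mul_eval_pos_of_isGapIndex
    (ne_zero_of_roots_eq_coe hfu (List.ne_nil_of_length_pos (by omega))) hfu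
    (hwu.isGapIndex_right hu hi)
  rw [pow_succ] at hfwi
  have hsign : 0 < (-1) ^ i * (g.leadingCoeff * (derivative g).eval (w.getD i 0)) := by
    refine pos_of_mul_pos_right (a := (-1) ^ i * -(f.leadingCoeff * f.eval (w.getD i 0))) ?_
      (by linarith)
    rw [neg_one_pow_mul_mul_neg_one_pow_mul]
    linarith
  have hm : (0 : ℝ) < g.natDegree := by rw [hg.natDegree_eq_length hgv]; exact_mod_cast hv0
  rw [leadingCoeff_derivative]
  linarith [mul_pos hm hsign]

theorem markov_derivative_interlacing_general (f g : Polynomial ℝ)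
    (hf : f.roots.card = f.natDegree)
    (hg : g.roots.card = g.natDegree)
    (h : StrictlyPrec g f) :
    StrictlyPrec (Polynomial.derivative g) (Polynomial.derivative f) := by
  obtain ⟨u, v, hfu, hgv, hu, hv, hvu⟩ := strictlyPrec_iff.mp h
  replace hf := splits_iff_card_roots.mpr hf
  replace hg := splits_iff_card_roots.mpr hg
  obtain ⟨w, hfw, hw, hwlen, hwu, hf'⟩ := hf.exists_roots_derivative hfu hu
  obtain ⟨x, hgx, hx, hxlen, -, hg'⟩ := hg.exists_roots_derivative hgv hv
  have := hvu.length_le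
  have := hvu.length_le_succ
  refine strictlyPrec_iff.mpr ⟨w, x, hfw, hgx, hw, hx,
    interlacing_of_isGapIndex (by omega) (by omega) fun i hi => ?_⟩
  exact hg'.isGapIndex_of_alternating_sign hgx hx hw (by omega) (fun j hj =>
    neg_one_pow_mul_eval_derivative_pos_of_interlacing hf hg hf' hfu hgv hfw hu hv hw hvu hwu
      hwlen hj) hi

/-- Markov's theorem: if `g` strictly interlaces (or strictly alternates left of)
`f`, where `f` and `g` have only real and distinct zeros, then the same relation
holds between their derivatives. -/
theorem markov_derivative_interlacing (f g : Polynomial ℝ)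
    (hf : f.roots.card = f.natDegree) (hf' : f.roots.Nodup)
    (hg : g.roots.card = g.natDegree) (hg' : g.roots.Nodup)
    (h : StrictlyPrec g f) :
    StrictlyPrec (Polynomial.derivative g) (Polynomial.derivative f) :=
  markov_derivative_interlacing_general f g hf hg h
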